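/- Let n > 2k, k ≥ t+3, t ≥ 2, and let F ⊆ C([n],k) be a maximal t-intersecting family with τ_t(F) = t+2 such that the family T_t(F) of minimum t-covers satisfies τ_t(T_t(F)) = t+1. If there exist a minimum t-cover U of T_t(F) (of size t+1) and F ∈ F with |U ∩ F| ≤ t−2, then |T_t(F)| ≤ 3(k−t+1) < (t+2)(k−t)+1. -/

import Mathlib

open Finset

def Intersecting (t : ℕ) (𝓕 : Finset (Finset ℕ)) : Prop :=
  ∀ A ∈ 𝓕, ∀ B ∈ 𝓕, t ≤ (A ∩ B).card

def IsCover (n t : ℕ) (𝓕 : Finset (Finset ℕ)) (S : Finset ℕ) : Prop :=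
  S ⊆ Finset.range n ∧ ∀ A ∈ 𝓕, t ≤ (S ∩ A).card

noncomputable def tau (n t : ℕ) (𝓕 : Finset (Finset ℕ)) : ℕ :=
  sInf {m | ∃ S, IsCover n t 𝓕 S ∧ S.card = m}

open Classical in
noncomputable def minCovers (n t : ℕ) (𝓕 : Finset (Finset ℕ)) : Finset (Finset ℕ) :=
  ((Finset.range n).powerset).filter
    (fun S => (∀ A ∈ 𝓕, t ≤ (S ∩ A).card) ∧ S.card = tau n t 𝓕)

def MaximalIntersecting (n k t : ℕ) (𝓕 : Finset (Finset ℕ)) : Prop :=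
  𝓕 ⊆ (Finset.range n).powersetCard k ∧ Intersecting t 𝓕 ∧
    ∀ 𝓖 : Finset (Finset ℕ), 𝓖 ⊆ (Finset.range n).powersetCard k →
      Intersecting t 𝓖 → 𝓕 ⊆ 𝓖 → 𝓖 = 𝓕

/-!
Every minimum `t`-cover `T` of `𝓕` has `t + 2` points and meets both `U` and `F` in at least `t`,
while `|U ∩ F| ≤ t - 2`; counting forces `|T ∩ U| = t`, `U ∩ F ⊆ T` and `T ⊆ U ∪ F`. So `T` misses
exactly one of the three points of `U \ F` and `T \ U` is a pair in the `(k - t + 2)`-set `F \ U`.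
Minimum covers pairwise `t`-intersect (extend one to a `k`-set avoiding the other; maximality puts
it in `𝓕`), so the pair families belonging to different missing points are cross-intersecting,
and minimality of `U` makes at least two of them nonempty.

Three such families of pairs on `m ≥ 5` points have at most `3 (m - 1)` members together: if one
contains two disjoint pairs, the other two live on the four pairs crossing them and, being
cross-intersecting, contribute at most `4`, while the first has at most `2 (m - 1)`; otherwise all
three are intersecting and Erdős–Ko–Rado bounds each by `m - 1`.
-/

def CrossIntersecting {α : Type*} (𝒜 ℬ : Finset (Finset α)) : Prop :=
  ∀ a ∈ 𝒜, ∀ b ∈ ℬ, ¬Disjoint a b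

theorem CrossIntersecting.symm {α : Type*} {𝒜 ℬ : Finset (Finset α)}
    (h : CrossIntersecting 𝒜 ℬ) : CrossIntersecting ℬ 𝒜 :=
  fun b hb a ha hba => h a ha b hb hba.symm

theorem CrossIntersecting.mono_left {α : Type*} {𝒜 𝒜' ℬ : Finset (Finset α)}
    (h : CrossIntersecting 𝒜 ℬ) (h' : 𝒜' ⊆ 𝒜) : CrossIntersecting 𝒜' ℬ :=
  fun a ha => h a (h' ha)

section TwoSets

variable {α : Type*} [DecidableEq α] {B : Finset α} {S S₁ S₂ S₃ : Finset (Finset α)}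

theorem card_le_choose_of_intersecting {r : ℕ} (hS : S ⊆ B.powersetCard r)
    (h : (S : Set (Finset α)).Intersecting) (hr : r ≤ #B / 2) :
    #S ≤ (#B - 1).choose (r - 1) := by
  set e : Fin #B ↪ α := B.equivFin.symm.toEmbedding.trans (Function.Embedding.subtype _)
  have hB : univ.map e = B := by
    ext x
    simp only [mem_map, mem_univ, true_and]
    exact ⟨fun ⟨i, hi⟩ => hi ▸ (B.equivFin.symm i).2,
      fun hx => ⟨B.equivFin ⟨x, hx⟩, by simp [e]⟩⟩
  set 𝒜 := (univ : Finset (Finset (Fin #B))).filter (fun u => u.map e ∈ S)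
  have h𝒜 : 𝒜.map (mapEmbedding e).toEmbedding = S := by
    ext s
    simp only [mem_map, mem_filter, mem_univ, true_and, 𝒜, RelEmbedding.coe_toEmbedding,
      mapEmbedding_apply]
    refine ⟨fun ⟨u, hu, hus⟩ => hus ▸ hu, fun hs => ?_⟩
    obtain ⟨u, -, rfl⟩ := subset_map_iff.mp (hB ▸ (mem_powersetCard.mp (hS hs)).1)
    exact ⟨u, hs, rfl⟩
  rw [← h𝒜, card_map]
  refine erdos_ko_rado (fun u hu v hv huv => ?_) (fun u hu => ?_) hr
  · exact h (mem_filter.mp hu).2 (mem_filter.mp hv).2 ((disjoint_map e).mpr huv)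
  · rw [← card_map e]
    exact (mem_powersetCard.mp (hS (mem_filter.mp hu).2)).2

theorem card_le_of_forall_mem (hS : S ⊆ B.powersetCard 2) {x : α} (hx : ∀ e ∈ S, x ∈ e) :
    #S ≤ #B - 1 := by
  rcases S.eq_empty_or_nonempty with rfl | ⟨e₀, he₀⟩
  · simp
  have hxB : x ∈ B := (mem_powersetCard.mp (hS he₀)).1 (hx e₀ he₀)
  calc #S ≤ #((B.erase x).image fun y => ({x, y} : Finset α)) := card_le_card fun e he => by
        obtain ⟨heB, he2⟩ := mem_powersetCard.mp (hS he)
        obtain ⟨y, hy⟩ := card_eq_one.mp (show #(e.erase x) = 1 by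
          rw [card_erase_of_mem (hx e he), he2])
        have hye : y ∈ e.erase x := hy ▸ mem_singleton_self y
        refine mem_image.mpr ⟨y, erase_subset_erase x heB hye, ?_⟩
        rw [← hy, insert_erase (hx e he)]
    _ ≤ #(B.erase x) := card_image_le
    _ = #B - 1 := card_erase_of_mem hxB

theorem card_le_of_forall_not_disjoint (hS : S ⊆ B.powersetCard 2) {f : Finset α}
    (hf : #f = 2) (h : ∀ e ∈ S, ¬Disjoint e f) : #S ≤ 2 * (#B - 1) := by
  obtain ⟨u, v, -, rfl⟩ := card_eq_two.mp hf
  have hu : #(S.filter (u ∈ ·)) ≤ #B - 1 :=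
    card_le_of_forall_mem ((filter_subset _ _).trans hS) fun e he => (mem_filter.mp he).2
  have hv : #(S.filter (u ∉ ·)) ≤ #B - 1 := by
    refine card_le_of_forall_mem ((filter_subset _ _).trans hS) (x := v) fun e he => ?_
    obtain ⟨heS, hue⟩ := mem_filter.mp he
    obtain ⟨w, hwe, hwf⟩ := not_disjoint_iff.mp (h e heS)
    rcases mem_insert.mp hwf with rfl | hw
    · exact absurd hwe hue
    · rwa [mem_singleton.mp hw] at hwe
  have := card_filter_add_card_filter_not (s := S) (u ∈ ·)
  omega

theorem mem_powersetCard_sdiff_of_not_disjoint {e f₁ f₂ : Finset α} (he : #e = 2)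
    (hf : Disjoint f₁ f₂) (h₁ : ¬Disjoint f₁ e) (h₂ : ¬Disjoint f₂ e) :
    e ∈ (f₁ ∪ f₂).powersetCard 2 \ {f₁, f₂} := by
  obtain ⟨u, hu₁, hue⟩ := not_disjoint_iff.mp h₁
  obtain ⟨v, hv₂, hve⟩ := not_disjoint_iff.mp h₂
  have huv : u ≠ v := fun huv => disjoint_left.mp hf hu₁ (huv ▸ hv₂)
  have : {u, v} = e := eq_of_subset_of_card_le (insert_subset hue (singleton_subset_iff.mpr hve))
    (by rw [he, card_pair huv])
  simp only [mem_sdiff, mem_powersetCard, mem_insert, mem_singleton, not_or]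
  refine ⟨⟨this ▸ insert_subset (mem_union_left _ hu₁)
    (singleton_subset_iff.mpr (mem_union_right _ hv₂)), he⟩, ?_, ?_⟩ <;> rintro rfl
  · exact h₂ hf.symm
  · exact h₁ hf

theorem card_add_card_le_four {f₁ f₂ : Finset α} (hf₁ : #f₁ = 2) (hf₂ : #f₂ = 2)
    (hf : Disjoint f₁ f₂) (h₂ : (S₂ : Set (Finset α)).Sized 2)
    (h₃ : (S₃ : Set (Finset α)).Sized 2) (h₁₂ : CrossIntersecting {f₁, f₂} S₂)
    (h₁₃ : CrossIntersecting {f₁, f₂} S₃) (h₂₃ : CrossIntersecting S₂ S₃) : #S₂ + #S₃ ≤ 4 := by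
  set W := f₁ ∪ f₂
  have hW : #W = 4 := by rw [card_union_of_disjoint hf, hf₁, hf₂]
  have hmem : ∀ S : Finset (Finset α), (S : Set (Finset α)).Sized 2 →
      CrossIntersecting {f₁, f₂} S → ∀ e ∈ S, e ∈ W.powersetCard 2 \ {f₁, f₂} :=
    fun S hS h e he => mem_powersetCard_sdiff_of_not_disjoint (hS he) hf
      (h f₁ (by simp) e he) (h f₂ (by simp) e he)
  have hS₃W : ∀ e ∈ S₃, e ⊆ W := fun e he =>
    (mem_powersetCard.mp (mem_sdiff.mp (hmem S₃ h₃ h₁₃ e he)).1).1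
  -- complementing in `W` turns the cross-intersecting `S₃` into a family disjoint from `S₂`
  set σS₃ := S₃.image (W \ ·)
  have hσ : #σS₃ = #S₃ := card_image_of_injOn fun e he e' he' hee' => by
    rw [← Finset.sdiff_sdiff_eq_self (hS₃W e he), ← Finset.sdiff_sdiff_eq_self (hS₃W e' he')]
    exact congrArg (W \ ·) hee'
  have hdisj : Disjoint S₂ σS₃ := by
    refine disjoint_left.mpr fun e he₂ he => ?_
    obtain ⟨e₃, he₃, rfl⟩ := mem_image.mp he
    exact h₂₃ _ he₂ e₃ he₃ disjoint_sdiff_self_left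
  have hunion : S₂ ∪ σS₃ ⊆ W.powersetCard 2 \ {f₁, f₂} := by
    refine union_subset (hmem S₂ h₂ h₁₂) fun e he => ?_
    obtain ⟨e₃, he₃, rfl⟩ := mem_image.mp he
    simp only [mem_sdiff, mem_powersetCard, mem_insert, mem_singleton, not_or]
    refine ⟨⟨sdiff_subset, by rw [card_sdiff_of_subset (hS₃W e₃ he₃), hW, h₃ he₃]⟩, ?_, ?_⟩ <;>
      intro h
    · exact h₁₃ f₁ (by simp) e₃ he₃ (h ▸ disjoint_sdiff_self_left)
    · exact h₁₃ f₂ (by simp) e₃ he₃ (h ▸ disjoint_sdiff_self_left)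
  have hf₁₂ : f₁ ≠ f₂ := by
    rintro rfl
    rw [disjoint_self_iff_empty] at hf
    simp [hf] at hf₁
  have hpair : {f₁, f₂} ⊆ W.powersetCard 2 := by
    simp [insert_subset_iff, mem_powersetCard, hf₁, hf₂, W]
  have := card_le_card hunion
  rw [card_union_of_disjoint hdisj, card_sdiff_of_subset hpair, card_powersetCard, hW,
    card_pair hf₁₂, hσ] at this
  simpa [Nat.choose] using this

theorem card_add_card_add_card_le_of_not_intersecting (hB : 5 ≤ #B)
    (h₁ : S₁ ⊆ B.powersetCard 2) (h₂ : S₂ ⊆ B.powersetCard 2) (h₃ : S₃ ⊆ B.powersetCard 2)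
    (h₁₂ : CrossIntersecting S₁ S₂) (h₁₃ : CrossIntersecting S₁ S₃)
    (h₂₃ : CrossIntersecting S₂ S₃) (hS₁ : ¬(S₁ : Set (Finset α)).Intersecting)
    (hne : S₂.Nonempty ∨ S₃.Nonempty) : #S₁ + #S₂ + #S₃ ≤ 3 * (#B - 1) := by
  obtain ⟨f₁, hf₁, f₂, hf₂, hf⟩ : ∃ f₁ ∈ S₁, ∃ f₂ ∈ S₁, Disjoint f₁ f₂ := by
    simpa [Set.Intersecting] using hS₁
  have hpair : {f₁, f₂} ⊆ S₁ := insert_subset hf₁ (singleton_subset_iff.mpr hf₂)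
  have hsized : ∀ {S}, S ⊆ B.powersetCard 2 → (S : Set (Finset α)).Sized 2 :=
    fun hS => (Set.sized_powersetCard B 2).mono (coe_subset.mpr hS)
  have h₂₃_card : #S₂ + #S₃ ≤ 4 :=
    card_add_card_le_four (hsized h₁ hf₁) (hsized h₁ hf₂) hf (hsized h₂) (hsized h₃)
      (h₁₂.mono_left hpair) (h₁₃.mono_left hpair) h₂₃
  have h₁_card : #S₁ ≤ 2 * (#B - 1) := by
    obtain ⟨f, hf, hfS⟩ : ∃ f ∈ B.powersetCard 2, ∀ e ∈ S₁, ¬Disjoint e f := by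
      rcases hne with ⟨f, hf⟩ | ⟨f, hf⟩
      exacts [⟨f, h₂ hf, fun e he => h₁₂ e he f hf⟩, ⟨f, h₃ hf, fun e he => h₁₃ e he f hf⟩]
    exact card_le_of_forall_not_disjoint h₁ (mem_powersetCard.mp hf).2 hfS
  omega

theorem card_add_card_add_card_le (hB : 5 ≤ #B)
    (h₁ : S₁ ⊆ B.powersetCard 2) (h₂ : S₂ ⊆ B.powersetCard 2) (h₃ : S₃ ⊆ B.powersetCard 2)
    (h₁₂ : CrossIntersecting S₁ S₂) (h₁₃ : CrossIntersecting S₁ S₃)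
    (h₂₃ : CrossIntersecting S₂ S₃) (hne₁ : S₂.Nonempty ∨ S₃.Nonempty)
    (hne₂ : S₁.Nonempty ∨ S₃.Nonempty) (hne₃ : S₁.Nonempty ∨ S₂.Nonempty) :
    #S₁ + #S₂ + #S₃ ≤ 3 * (#B - 1) := by
  by_cases hi₁ : (S₁ : Set (Finset α)).Intersecting
  swap
  · exact card_add_card_add_card_le_of_not_intersecting hB h₁ h₂ h₃ h₁₂ h₁₃ h₂₃ hi₁ hne₁
  by_cases hi₂ : (S₂ : Set (Finset α)).Intersecting
  swap
  · have := card_add_card_add_card_le_of_not_intersecting hB h₂ h₁ h₃ h₁₂.symm h₂₃ h₁₃ hi₂ hne₂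
    omega
  by_cases hi₃ : (S₃ : Set (Finset α)).Intersecting
  swap
  · have := card_add_card_add_card_le_of_not_intersecting hB h₃ h₁ h₂ h₁₃.symm h₂₃.symm h₁₂
      hi₃ hne₃
    omega
  have ekr : ∀ S ⊆ B.powersetCard 2, (S : Set (Finset α)).Intersecting → #S ≤ #B - 1 :=
    fun S hS hi => by simpa using card_le_choose_of_intersecting hS hi (by omega)
  have := ekr S₁ h₁ hi₁
  have := ekr S₂ h₂ hi₂
  have := ekr S₃ h₃ hi₃
  omega

theorem sum_card_le_of_card_eq_three {ι : Type*} [DecidableEq ι] {A : Finset ι} (hA : #A = 3)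
    {S : ι → Finset (Finset α)} (hB : 5 ≤ #B) (hS : ∀ x ∈ A, S x ⊆ B.powersetCard 2)
    (hcross : ∀ x ∈ A, ∀ y ∈ A, x ≠ y → CrossIntersecting (S x) (S y))
    (hne : ∀ x ∈ A, ∃ y ∈ A, y ≠ x ∧ (S y).Nonempty) :
    ∑ x ∈ A, #(S x) ≤ 3 * (#B - 1) := by
  obtain ⟨a, b, c, hab, hac, hbc, rfl⟩ := card_eq_three.mp hA
  rw [sum_insert (by simp [hab, hac]), sum_insert (by simp [hbc]), sum_singleton, ← add_assoc]
  simp only [mem_insert, mem_singleton, forall_eq_or_imp, forall_eq, exists_eq_or_imp,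
    exists_eq_left, ne_eq, not_true_eq_false, false_and, false_or, or_false] at hS hcross hne
  exact card_add_card_add_card_le hB hS.1 hS.2.1 hS.2.2 (hcross.1.2.1 hab) (hcross.1.2.2 hac)
    (hcross.2.1.2.2 hbc) (hne.1.imp And.right And.right) (hne.2.1.imp And.right And.right)
    (hne.2.2.imp And.right And.right)

end TwoSets

section Covers

variable {n k t : ℕ} {𝓕 : Finset (Finset ℕ)}

theorem mem_minCovers {T : Finset ℕ} :
    T ∈ minCovers n t 𝓕 ↔ IsCover n t 𝓕 T ∧ #T = tau n t 𝓕 := by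
  classical
  simp [minCovers, IsCover, and_assoc]

theorem tau_le_card {S : Finset ℕ} (h : IsCover n t 𝓕 S) : tau n t 𝓕 ≤ #S :=
  Nat.sInf_le ⟨S, h, rfl⟩

theorem exists_mem_of_mem_minCovers {U : Finset ℕ} (hU : U ∈ minCovers n t 𝓕) {x : ℕ}
    (hx : x ∈ U) : ∃ A ∈ 𝓕, x ∈ A := by
  obtain ⟨⟨hUn, hUcov⟩, hUcard⟩ := mem_minCovers.mp hU
  by_contra! h
  have hcov : IsCover n t 𝓕 (U.erase x) := ⟨(erase_subset x U).trans hUn, fun A hA => by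
    rw [erase_inter, erase_eq_of_notMem fun hx => h A hA (mem_inter.mp hx).2]
    exact hUcov A hA⟩
  have := tau_le_card hcov
  rw [card_erase_of_mem hx, ← hUcard] at this
  have := card_pos.mpr ⟨x, hx⟩
  omega

theorem MaximalIntersecting.mem_of_le_card_inter (hmax : MaximalIntersecting n k t 𝓕)
    (ht : t ≤ k) {K : Finset ℕ} (hK : K ∈ (range n).powersetCard k)
    (hKF : ∀ A ∈ 𝓕, t ≤ #(K ∩ A)) : K ∈ 𝓕 := by
  have hint : Intersecting t (insert K 𝓕) := by
    intro A hA B hB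
    rcases mem_insert.mp hA with rfl | hA' <;> rcases mem_insert.mp hB with rfl | hB'
    · rwa [inter_self, (mem_powersetCard.mp hK).2]
    · exact hKF B hB'
    · rw [inter_comm]
      exact hKF A hA'
    · exact hmax.2.1 A hA' B hB'
  rw [← hmax.2.2 _ (insert_subset hK hmax.1) hint (subset_insert _ _)]
  exact mem_insert_self _ _

-- Extend `T₁` to a `k`-set avoiding `T₂ \ T₁`; by maximality it lies in `𝓕`, so `T₂` meets
-- it, hence `T₁`, in `t` points.
theorem MaximalIntersecting.le_card_inter_of_isCover (hmax : MaximalIntersecting n k t 𝓕)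
    (ht : t ≤ k) {T₁ T₂ : Finset ℕ} (h₁ : IsCover n t 𝓕 T₁) (h₂ : IsCover n t 𝓕 T₂)
    (hT₁ : #T₁ ≤ k) (hn : k + #T₂ ≤ n) : t ≤ #(T₁ ∩ T₂) := by
  obtain ⟨W, hW, hWcard⟩ : ∃ W ⊆ range n \ (T₁ ∪ T₂), #W = k - #T₁ := by
    refine exists_subset_card_eq ?_
    have := le_card_sdiff (T₁ ∪ T₂) (range n)
    have := card_union_le T₁ T₂
    rw [card_range] at *
    omega
  have hdisj : Disjoint T₁ W := disjoint_right.mpr fun x hx hx₁ => by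
    simpa [hx₁] using hW hx
  have hK : T₁ ∪ W ∈ (range n).powersetCard k := mem_powersetCard.mpr
    ⟨union_subset h₁.1 (hW.trans sdiff_subset), by rw [card_union_of_disjoint hdisj]; omega⟩
  have hKF : T₁ ∪ W ∈ 𝓕 := hmax.mem_of_le_card_inter ht hK fun A hA =>
    (h₁.2 A hA).trans (card_le_card (inter_subset_inter_right subset_union_left))
  calc t ≤ #(T₂ ∩ (T₁ ∪ W)) := h₂.2 _ hKF
    _ ≤ #(T₁ ∩ T₂) := card_le_card fun x hx => by
        have := @hW x
        simp only [mem_inter, mem_union, mem_sdiff] at hx this ⊢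
        tauto

end Covers


section Fibres

variable {α : Type*} [DecidableEq α] {t : ℕ} {U F T T' : Finset α} {𝓣 : Finset (Finset α)}

theorem card_inter_eq_of_card_eq_add_two (hT : #T = t + 2) (hUT : t ≤ #(U ∩ T))
    (hTF : t ≤ #(T ∩ F)) (hUF : #(U ∩ F) + 2 ≤ t) :
    #(U ∩ T) = t ∧ #(U ∩ F) + 2 = t ∧ U ∩ F ⊆ T ∧ T \ U ∈ (F \ U).powersetCard 2 := by
  have hunion := card_union_add_card_inter (U ∩ T) (T ∩ F)
  have hsub_T : (U ∩ T) ∪ (T ∩ F) ⊆ T := union_subset inter_subset_right inter_subset_left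
  have hsub_UF : (U ∩ T) ∩ (T ∩ F) ⊆ U ∩ F := fun x hx => by
    simp only [mem_inter] at hx ⊢
    tauto
  have := card_le_card hsub_T
  have := card_le_card hsub_UF
  have hUF_eq : (U ∩ T) ∩ (T ∩ F) = U ∩ F := eq_of_subset_of_card_le hsub_UF (by omega)
  have hT_eq : (U ∩ T) ∪ (T ∩ F) = T := eq_of_subset_of_card_le hsub_T (by omega)
  refine ⟨by omega, by omega, ?_, mem_powersetCard.mpr ⟨fun x hx => ?_, ?_⟩⟩
  · rw [← hUF_eq]
    exact inter_subset_right.trans inter_subset_left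
  · obtain ⟨hxT, hxU⟩ := mem_sdiff.mp hx
    rw [← hT_eq] at hxT
    simp only [mem_union, mem_inter] at hxT
    exact mem_sdiff.mpr ⟨by tauto, hxU⟩
  · rw [card_sdiff]
    omega

theorem inter_eq_erase_of_card_add_one {x : α} (hx : x ∈ U) (hxT : x ∉ T)
    (h : #(U ∩ T) + 1 = #U) : U ∩ T = U.erase x :=
  eq_of_subset_of_card_le
    (fun y hy => mem_erase.mpr ⟨ne_of_mem_of_not_mem (mem_inter.mp hy).2 hxT, (mem_inter.mp hy).1⟩)
    (by rw [card_erase_of_mem hx]; omega)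

theorem eq_of_sdiff_eq_of_notMem {x : α} (hx : x ∈ U) (hxT : x ∉ T) (hxT' : x ∉ T')
    (hT : #(U ∩ T) + 1 = #U) (hT' : #(U ∩ T') + 1 = #U) (h : T \ U = T' \ U) : T = T' := by
  rw [← sdiff_union_inter T U, ← sdiff_union_inter T' U, h, inter_comm T, inter_comm T',
    inter_eq_erase_of_card_add_one hx hxT hT, inter_eq_erase_of_card_add_one hx hxT' hT']

theorem not_disjoint_sdiff_sdiff {x y : α} (hx : x ∈ U) (hy : y ∈ U) (hxy : x ≠ y)
    (hxT : x ∉ T) (hyT' : y ∉ T') (h : #U ≤ #(T ∩ T') + 1) : ¬Disjoint (T \ U) (T' \ U) := by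
  intro hd
  have hsub : T ∩ T' ⊆ (U.erase x).erase y := fun z hz => by
    obtain ⟨hzT, hzT'⟩ := mem_inter.mp hz
    have hzU : z ∈ U := by
      by_contra hzU
      exact disjoint_left.mp hd (mem_sdiff.mpr ⟨hzT, hzU⟩) (mem_sdiff.mpr ⟨hzT', hzU⟩)
    exact mem_erase.mpr ⟨ne_of_mem_of_not_mem hzT' hyT',
      mem_erase.mpr ⟨ne_of_mem_of_not_mem hzT hxT, hzU⟩⟩
  have := card_le_card hsub
  rw [card_erase_of_mem (mem_erase.mpr ⟨hxy.symm, hy⟩), card_erase_of_mem hx] at this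
  have := one_lt_card.mpr ⟨x, hx, y, hy, hxy⟩
  omega

theorem sum_card_filter_notMem {A : Finset α} (h : ∀ T ∈ 𝓣, #(A \ T) = 1) :
    ∑ x ∈ A, #(𝓣.filter (x ∉ ·)) = #𝓣 := by
  have := sum_card_bipartiteAbove_eq_sum_card_bipartiteBelow (fun x (T : Finset α) => x ∉ T)
    (s := A) (t := 𝓣)
  simp only [bipartiteAbove, bipartiteBelow, filter_notMem_eq_sdiff] at this
  rw [this, card_eq_sum_ones 𝓣]
  exact sum_congr rfl h

def fibre (𝓣 : Finset (Finset α)) (U : Finset α) (x : α) : Finset (Finset α) :=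
  (𝓣.filter (x ∉ ·)).image (· \ U)

theorem card_fibre {x : α} (hx : x ∈ U) (h : ∀ T ∈ 𝓣, #(U ∩ T) + 1 = #U) :
    #(fibre 𝓣 U x) = #(𝓣.filter (x ∉ ·)) :=
  card_image_of_injOn fun T hT T' hT' hTT' => by
    rw [coe_filter] at hT hT'
    exact eq_of_sdiff_eq_of_notMem hx hT.2 hT'.2 (h T hT.1) (h T' hT'.1) hTT'

theorem fibre_subset {B : Finset α} {x : α} (h : ∀ T ∈ 𝓣, T \ U ∈ B.powersetCard 2) :
    fibre 𝓣 U x ⊆ B.powersetCard 2 := fun e he => by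
  obtain ⟨T, hT, rfl⟩ := mem_image.mp he
  exact h T (mem_filter.mp hT).1

theorem crossIntersecting_fibre {x y : α} (hx : x ∈ U) (hy : y ∈ U) (hxy : x ≠ y)
    (h : ∀ T ∈ 𝓣, ∀ T' ∈ 𝓣, #U ≤ #(T ∩ T') + 1) :
    CrossIntersecting (fibre 𝓣 U x) (fibre 𝓣 U y) := by
  intro e he e' he'
  obtain ⟨T, hT, rfl⟩ := mem_image.mp he
  obtain ⟨T', hT', rfl⟩ := mem_image.mp he'
  obtain ⟨hT, hxT⟩ := mem_filter.mp hT
  obtain ⟨hT', hyT'⟩ := mem_filter.mp hT'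
  exact not_disjoint_sdiff_sdiff hx hy hxy hxT hyT' (h T hT T' hT')

theorem exists_fibre_nonempty {A : Finset α} {x : α} (hT : T ∈ 𝓣) (hxT : x ∈ T)
    (hA : #(A \ T) = 1) : ∃ y ∈ A, y ≠ x ∧ (fibre 𝓣 U y).Nonempty := by
  obtain ⟨y, hy⟩ := card_eq_one.mp hA
  obtain ⟨hyA, hyT⟩ := mem_sdiff.mp (hy ▸ mem_singleton_self y)
  exact ⟨y, hyA, (ne_of_mem_of_not_mem hxT hyT).symm,
    ⟨T \ U, mem_image_of_mem _ (mem_filter.mpr ⟨hT, hyT⟩)⟩⟩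

-- Each member of `𝓣` misses exactly one point of `U`, and it lies in `U \ F`; sorting `𝓣` by
-- that point gives three cross-intersecting families of pairs in `F \ U`.
theorem card_le_three_mul_of_card_inter_add_two_le (hU : #U = t + 1)
    (hUF : #(U ∩ F) + 2 ≤ t) (hF : t + 3 ≤ #F) (hcard : ∀ T ∈ 𝓣, #T = t + 2)
    (hTF : ∀ T ∈ 𝓣, t ≤ #(T ∩ F)) (hUT : ∀ T ∈ 𝓣, t ≤ #(U ∩ T))
    (hint : ∀ T ∈ 𝓣, ∀ T' ∈ 𝓣, t ≤ #(T ∩ T')) (hcovU : ∀ x ∈ U, ∃ T ∈ 𝓣, x ∈ T) :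
    #𝓣 ≤ 3 * (#F - t + 1) := by
  have hstruct := fun T hT =>
    card_inter_eq_of_card_eq_add_two (hcard T hT) (hUT T hT) (hTF T hT) hUF
  have hUT' : ∀ T ∈ 𝓣, #(U ∩ T) + 1 = #U := fun T hT => by rw [(hstruct T hT).1, hU]
  obtain ⟨x₀, hx₀⟩ := card_pos.mp (by omega : 0 < #U)
  obtain ⟨T₀, hT₀, -⟩ := hcovU x₀ hx₀
  have hUF' := (hstruct T₀ hT₀).2.1
  have hA : #(U \ F) = 3 := by rw [card_sdiff, inter_comm]; omega
  have hB : #(F \ U) = #F - t + 2 := by rw [card_sdiff]; omega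
  have hmiss : ∀ T ∈ 𝓣, #((U \ F) \ T) = 1 := fun T hT => by
    have hUFT := (hstruct T hT).2.2.1
    have : (U \ F) \ T = U \ T := by
      ext z
      have := @hUFT z
      simp only [mem_sdiff, mem_inter] at this ⊢
      tauto
    rw [this, card_sdiff, inter_comm]
    have := hUT' T hT
    omega
  have hsum : ∑ x ∈ U \ F, #(fibre 𝓣 U x) = #𝓣 := by
    rw [← sum_card_filter_notMem hmiss]
    exact sum_congr rfl fun x hx => card_fibre (mem_sdiff.mp hx).1 hUT'
  have := sum_card_le_of_card_eq_three hA (by omega)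
    (fun x _ => fibre_subset fun T hT => (hstruct T hT).2.2.2)
    (fun x hx y hy hxy => crossIntersecting_fibre (mem_sdiff.mp hx).1 (mem_sdiff.mp hy).1 hxy
      fun T hT T' hT' => by have := hint T hT T' hT'; omega)
    (fun x hx => by
      obtain ⟨T, hT, hxT⟩ := hcovU x (mem_sdiff.mp hx).1
      exact exists_fibre_nonempty hT hxT (hmiss T hT))
  omega

end Fibres

theorem stmt12 (n k t : ℕ) (ht : 2 ≤ t) (hk : t + 3 ≤ k) (hn : 2 * k < n)
    (𝓕 : Finset (Finset ℕ)) (hmax : MaximalIntersecting n k t 𝓕)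
    (htau : tau n t 𝓕 = t + 2)
    (htau2 : tau n t (minCovers n t 𝓕) = t + 1)
    (U F : Finset ℕ) (hU : U ∈ minCovers n t (minCovers n t 𝓕)) (hF : F ∈ 𝓕)
    (hUF : (U ∩ F).card ≤ t - 2) :
    (minCovers n t 𝓕).card ≤ 3 * (k - t + 1) ∧
      3 * (k - t + 1) < (t + 2) * (k - t) + 1 := by
  have hMC : ∀ T ∈ minCovers n t 𝓕, IsCover n t 𝓕 T ∧ #T = t + 2 := fun T hT =>
    htau ▸ mem_minCovers.mp hT
  obtain ⟨⟨-, hUcov⟩, hUcard⟩ := mem_minCovers.mp hU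
  have hFcard : #F = k := (mem_powersetCard.mp (hmax.1 hF)).2
  refine ⟨?_, ?_⟩
  · have := card_le_three_mul_of_card_inter_add_two_le (hUcard.trans htau2) (by omega)
      (by omega) (fun T hT => (hMC T hT).2) (fun T hT => (hMC T hT).1.2 F hF) hUcov
      (fun T hT T' hT' => hmax.le_card_inter_of_isCover (by omega) (hMC T hT).1 (hMC T' hT').1
        (by rw [(hMC T hT).2]; omega) (by rw [(hMC T' hT').2]; omega))
      fun x hx => exists_mem_of_mem_minCovers hU hx
    rwa [hFcard] at this
  · obtain ⟨d, rfl⟩ := Nat.exists_eq_add_of_le hk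
    rw [show t + 3 + d - t = d + 3 by omega]
    nlinarith
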